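/- Let m be a nonnegative integer. Then (q;q)_m / (x;q)_{m+1} = Σ_{k=0}^{m} [m choose k]_q · (-1)^k q^{binom(k+1,2)} / (1 - x q^k), as an identity of rational functions in q and x. -/

import Mathlib

open Finset Polynomial

noncomputable def qP {K : Type*} [Field K] (a q : K) (n : ℕ) : K :=
  ∏ i ∈ Finset.range n, (1 - a * q ^ i)

noncomputable def qBin {K : Type*} [Field K] (q : K) (n k : ℕ) : K :=
  if k ≤ n then qP (q ^ (n - k + 1)) q k / qP q q k else 0

/-- The field of rational functions in two variables `q2`, `x2` over `ℚ`. -/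
noncomputable def q2 : RatFunc (RatFunc ℚ) := RatFunc.C RatFunc.X
noncomputable def x2 : RatFunc (RatFunc ℚ) := RatFunc.X

/-! Write `F_m(x) = (q;q)_m / (x;q)_{m+1}`. Since
`1/(1-x) - q^{m+1}/(1-xq^{m+1}) = (1-q^{m+1})/((1-x)(1-xq^{m+1}))`, the left side satisfies
`F_{m+1}(x) = F_m(x) - q^{m+1} F_m(qx)`, and the q-Pascal rule
`[m+1, k+1] = [m, k+1] + q^{m-k} [m, k]` shows that the partial fraction sum satisfies the same
recurrence. Induction on `m`, for all `x` at once, proves the identity in any field in which `q` is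
not a root of unity and `x` avoids `q^{-ℕ}`, as is the case for `q` and `x` in `ℚ(q)(x)`. -/

section QPochhammer

variable {K : Type*} [Field K]

theorem qP_succ (a q : K) (n : ℕ) : qP a q (n + 1) = qP a q n * (1 - a * q ^ n) :=
  prod_range_succ _ _

theorem qP_succ' (a q : K) (n : ℕ) : qP a q (n + 1) = (1 - a) * qP (a * q) q n := by
  simp only [qP, prod_range_succ', pow_zero, mul_one, mul_assoc, ← pow_succ']
  ring

theorem qP_self_add (q : K) (j k : ℕ) : qP q q (j + k) = qP q q j * qP (q ^ (j + 1)) q k := by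
  simp only [qP, prod_range_add, ← pow_add, ← pow_succ']
  congr 2 with i
  ring_nf

theorem qP_ne_zero {a q : K} (h : ∀ i, a * q ^ i ≠ 1) (n : ℕ) : qP a q n ≠ 0 :=
  prod_ne_zero_iff.mpr fun i _ ↦ sub_ne_zero_of_ne (h i).symm

variable {q : K}

theorem qP_self_ne_zero (hq : ∀ n, q ^ (n + 1) ≠ 1) (n : ℕ) : qP q q n ≠ 0 :=
  qP_ne_zero (fun i ↦ by rw [← pow_succ']; exact hq i) n

end QPochhammer

section QBinomial

variable {K : Type*} [Field K] {q : K}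

theorem qBin_zero (q : K) (n : ℕ) : qBin q n 0 = 1 := by
  simp [qBin, qP]

theorem qBin_of_lt (q : K) {n k : ℕ} (h : n < k) : qBin q n k = 0 :=
  if_neg (Nat.not_le.mpr h)

theorem qBin_self (hq : ∀ n, q ^ (n + 1) ≠ 1) (n : ℕ) : qBin q n n = 1 := by
  rw [qBin, if_pos le_rfl, Nat.sub_self, zero_add, pow_one, div_self (qP_self_ne_zero hq n)]

theorem qBin_eq_div (hq : ∀ n, q ^ (n + 1) ≠ 1) {n k : ℕ} (h : k ≤ n) :
    qBin q n k = qP q q n / (qP q q k * qP q q (n - k)) := by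
  obtain ⟨j, rfl⟩ := Nat.exists_eq_add_of_le h
  rw [qBin, if_pos h, Nat.add_sub_cancel_left, add_comm k j, qP_self_add, mul_comm (qP q q k),
    mul_div_mul_left _ _ (qP_self_ne_zero hq j)]

theorem qBin_succ_succ (hq : ∀ n, q ^ (n + 1) ≠ 1) (m k : ℕ) :
    qBin q (m + 1) (k + 1) = qBin q m (k + 1) + q ^ (m - k) * qBin q m k := by
  rcases lt_trichotomy k m with hkm | rfl | hmk
  · obtain ⟨j, rfl⟩ := Nat.exists_eq_add_of_lt hkm
    rw [qBin_eq_div hq (by omega), qBin_eq_div hq (by omega), qBin_eq_div hq (by omega),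
      show k + j + 1 + 1 - (k + 1) = j + 1 by omega, show k + j + 1 - (k + 1) = j by omega,
      show k + j + 1 - k = j + 1 by omega, qP_succ q q (k + j + 1), qP_succ q q k,
      qP_succ q q j]
    have hk : 1 - q * q ^ k ≠ 0 := sub_ne_zero_of_ne (by rw [← pow_succ']; exact (hq k).symm)
    have hj : 1 - q * q ^ j ≠ 0 := sub_ne_zero_of_ne (by rw [← pow_succ']; exact (hq j).symm)
    have hPk := qP_self_ne_zero hq k
    have hPj := qP_self_ne_zero hq j
    field_simp
    ring
  · rw [qBin_self hq, qBin_self hq, qBin_of_lt q (Nat.lt_succ_self k), Nat.sub_self]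
    ring
  · rw [qBin_of_lt q (by omega), qBin_of_lt q (by omega), qBin_of_lt q hmk, mul_zero, add_zero]

end QBinomial

section PartialFraction

variable {K : Type*} [Field K] {q : K}

noncomputable def qPartialFractionTerm (q x : K) (m k : ℕ) : K :=
  qBin q m k * (-1) ^ k * q ^ (k * (k + 1) / 2) / (1 - x * q ^ k)

theorem qPartialFractionTerm_succ_succ (hq : ∀ n, q ^ (n + 1) ≠ 1) (x : K) {m k : ℕ}
    (hk : k ≤ m) :
    qPartialFractionTerm q x (m + 1) (k + 1) =
      qPartialFractionTerm q x m (k + 1) - q ^ (m + 1) * qPartialFractionTerm q (x * q) m k := by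
  have triangle : (k + 1) * (k + 1 + 1) / 2 = k * (k + 1) / 2 + (k + 1) := by
    rw [show (k + 1) * (k + 1 + 1) = k * (k + 1) + (k + 1) * 2 by ring,
      Nat.add_mul_div_right _ _ two_pos]
  have hpow : q ^ (m - k) * q ^ (k + 1) = q ^ (m + 1) := by
    rw [← pow_add]; congr 1; omega
  simp only [qPartialFractionTerm, qBin_succ_succ hq, triangle, pow_add _ (k * (k + 1) / 2),
    ← hpow]
  ring

theorem sum_qPartialFractionTerm_succ (hq : ∀ n, q ^ (n + 1) ≠ 1) (x : K) (m : ℕ) :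
    ∑ k ∈ range (m + 2), qPartialFractionTerm q x (m + 1) k =
      ∑ k ∈ range (m + 1), qPartialFractionTerm q x m k -
        q ^ (m + 1) * ∑ k ∈ range (m + 1), qPartialFractionTerm q (x * q) m k := by
  have head : qPartialFractionTerm q x (m + 1) 0 = qPartialFractionTerm q x m 0 := by
    simp only [qPartialFractionTerm, qBin_zero]
  have tail : qPartialFractionTerm q x m (m + 1) = 0 := by
    rw [qPartialFractionTerm, qBin_of_lt q (Nat.lt_succ_self m), zero_mul, zero_mul, zero_div]
  rw [sum_range_succ', head, sum_congr rfl fun k hk ↦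
      qPartialFractionTerm_succ_succ hq x (Nat.lt_succ_iff.mp (mem_range.mp hk)),
    sum_sub_distrib, ← mul_sum, sub_add_eq_add_sub, ← sum_range_succ', sum_range_succ, tail,
    add_zero]

theorem mul_mul_pow_ne_one {x : K} (hx : ∀ k, x * q ^ k ≠ 1) (k : ℕ) :
    x * q * q ^ k ≠ 1 := by
  rw [mul_assoc, ← pow_succ']; exact hx (k + 1)

theorem qP_self_succ_div_qP_succ_succ {x : K} (hx : ∀ k, x * q ^ k ≠ 1) (m : ℕ) :
    qP q q (m + 1) / qP x q (m + 2) =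
      qP q q m / qP x q (m + 1) - q ^ (m + 1) * (qP q q m / qP (x * q) q (m + 1)) := by
  have h0 : 1 - x ≠ 0 := sub_ne_zero_of_ne (by simpa using (hx 0).symm)
  have hm : 1 - q * q ^ m * x ≠ 0 :=
    sub_ne_zero_of_ne (by rw [← pow_succ', mul_comm]; exact (hx _).symm)
  have hD := qP_ne_zero (mul_mul_pow_ne_one hx) m
  rw [qP_succ' x q (m + 1), qP_succ' x q m, qP_succ q q, qP_succ (x * q) q]
  generalize qP (x * q) q m = D at hD ⊢
  field_simp
  ring

theorem qP_self_div_qP_succ_eq_sum (hq : ∀ n, q ^ (n + 1) ≠ 1) (m : ℕ) :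
    ∀ x : K, (∀ k, x * q ^ k ≠ 1) →
      qP q q m / qP x q (m + 1) = ∑ k ∈ range (m + 1), qPartialFractionTerm q x m k := by
  induction m with
  | zero => intro x _; simp [qP, qPartialFractionTerm, qBin_zero]
  | succ m ih =>
    intro x hx
    rw [qP_self_succ_div_qP_succ_succ hx, sum_qPartialFractionTerm_succ hq, ih x hx,
      ih _ (mul_mul_pow_ne_one hx)]

end PartialFraction

namespace RatFunc

variable {K : Type*} [Field K]

theorem X_pow_succ_ne_one (n : ℕ) : (X : RatFunc K) ^ (n + 1) ≠ 1 := fun h ↦ by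
  have := congrArg intDegree h
  rw [← algebraMap_X, ← map_pow, intDegree_polynomial, natDegree_X_pow, intDegree_one] at this
  omega

theorem X_mul_C_ne_one (c : K) : (X : RatFunc K) * C c ≠ 1 := fun h ↦ by
  have hc : C c ≠ 0 := by rintro hc; simp [hc] at h
  have := congrArg intDegree h
  rw [intDegree_mul X_ne_zero hc, intDegree_X, intDegree_C, intDegree_one] at this
  omega

end RatFunc

theorem stmt_8 (m : ℕ) :
    qP q2 q2 m / qP x2 q2 (m + 1) =
      ∑ k ∈ Finset.range (m + 1),
        qBin q2 m k * (-1) ^ k * q2 ^ (k * (k + 1) / 2) / (1 - x2 * q2 ^ k) := by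
  have hq : ∀ n, q2 ^ (n + 1) ≠ 1 := fun n h ↦
    RatFunc.X_pow_succ_ne_one n ((RatFunc.C (K := RatFunc ℚ)).injective (by
      rw [map_pow, map_one]; exact h))
  have hx : ∀ k, x2 * q2 ^ k ≠ 1 := fun k ↦ by
    rw [q2, ← map_pow]; exact RatFunc.X_mul_C_ne_one _
  exact qP_self_div_qP_succ_eq_sum hq m x2 hx
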